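/- Let Δ ≥ 3 and let V be the 2^{Δ-1} × 2^{Δ-1} real symmetric matrix with V_{x,y} = -1 if binary strings x, y differ in all Δ-1 positions, V_{x,y} = 1 if they differ in exactly one position, and 0 otherwise. Then for every vector α ∈ ℂ^{2^{Δ-1}}, α† V α ≤ (Δ-2)·‖α‖². -/

import Mathlib

/-!
Write `n = Δ - 1` and read indices as subsets of `range n`. Then `V` is the adjacency matrix of
the hypercube minus the antipodal map, and both are diagonalised by the Walsh characters
`χ_S(z) = (-1) ^ #(S ∩ z)`, with eigenvalues `n - 2 #S` and `(-1) ^ #S`. So `V` acts on `χ_S` by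
`n - 2 #S - (-1) ^ #S ≤ n - 1`, and since the characters are orthogonal,
`∑_S χ_S(x) χ_S(y) = 2 ^ n δ_{xy}`, expanding `α` in them bounds the quadratic form by Parseval.
-/

open Finset ComplexConjugate

section SpectralBound

variable {ι κ : Type*} [Fintype ι] [Fintype κ]

theorem sum_sum_conj_mul_mul_eq_sum_mul_norm_sq (χ : κ → ι → ℝ) (μ : κ → ℝ) (α : ι → ℂ) :
    ∑ x, ∑ y, conj (α x) * ((∑ S, μ S * (χ S x * χ S y) : ℝ) : ℂ) * α y =
      ((∑ S, μ S * ‖∑ x, (χ S x : ℂ) * α x‖ ^ 2 : ℝ) : ℂ) := by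
  push_cast
  simp_rw [← Complex.conj_mul', map_sum, map_mul, Complex.conj_ofReal, sum_mul_sum, mul_sum,
    sum_mul]
  rw [sum_comm_cycle]
  exact sum_congr rfl fun S _ => sum_congr rfl fun x _ => sum_congr rfl fun y _ => by ring

variable [DecidableEq ι] {χ : κ → ι → ℝ} {N : ℝ}

theorem sum_norm_sq_eq_of_orthogonal
    (horth : ∀ x y, ∑ S, χ S x * χ S y = if x = y then N else 0) (α : ι → ℂ) :
    ∑ S, ‖∑ x, (χ S x : ℂ) * α x‖ ^ 2 = N * ∑ x, ‖α x‖ ^ 2 := by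
  have h := sum_sum_conj_mul_mul_eq_sum_mul_norm_sq χ (fun _ => 1) α
  simp only [one_mul, horth, apply_ite Complex.ofReal, Complex.ofReal_zero, mul_ite, ite_mul,
    mul_zero, zero_mul, sum_ite_eq, mem_univ, if_true] at h
  apply Complex.ofReal_injective
  rw [← h]
  push_cast
  rw [mul_sum]
  exact sum_congr rfl fun x _ => by rw [← Complex.conj_mul']; ring

theorem re_sum_conj_mul_mul_le_of_orthogonal (hN : 0 < N)
    (horth : ∀ x y, ∑ S, χ S x * χ S y = if x = y then N else 0)
    {μ : κ → ℝ} {c : ℝ} (hμ : ∀ S, μ S ≤ c)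
    {V : Matrix ι ι ℝ} (hV : ∀ x y, N * V x y = ∑ S, μ S * (χ S x * χ S y)) (α : ι → ℂ) :
    (∑ x, ∑ y, conj (α x) * (V x y : ℂ) * α y).re ≤ c * ∑ x, ‖α x‖ ^ 2 := by
  set β := fun S => ∑ x, (χ S x : ℂ) * α x
  have hNq : N * (∑ x, ∑ y, conj (α x) * (V x y : ℂ) * α y).re = ∑ S, μ S * ‖β S‖ ^ 2 := by
    rw [← Complex.re_ofReal_mul, ← Complex.ofReal_re (∑ S, μ S * ‖β S‖ ^ 2),
      ← sum_sum_conj_mul_mul_eq_sum_mul_norm_sq, mul_sum]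
    simp_rw [mul_sum, ← hV]
    push_cast
    congr 1
    exact sum_congr rfl fun x _ => sum_congr rfl fun y _ => by ring
  have hbound : ∑ S, μ S * ‖β S‖ ^ 2 ≤ N * (c * ∑ x, ‖α x‖ ^ 2) := by
    calc ∑ S, μ S * ‖β S‖ ^ 2 ≤ ∑ S, c * ‖β S‖ ^ 2 :=
          sum_le_sum fun S _ => mul_le_mul_of_nonneg_right (hμ S) (by positivity)
      _ = N * (c * ∑ x, ‖α x‖ ^ 2) := by
          rw [← mul_sum, sum_norm_sq_eq_of_orthogonal horth]; ring
  exact le_of_mul_le_mul_left (hNq ▸ hbound) hN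

end SpectralBound

theorem sum_sub_prod_le_card_sub_one {ι : Type*} (s : Finset ι) {η : ι → ℝ}
    (hη : ∀ i ∈ s, η i = 1 ∨ η i = -1) : ∑ i ∈ s, η i - ∏ i ∈ s, η i ≤ #s - 1 := by
  by_cases hall : ∀ i ∈ s, η i = 1
  · simp [sum_congr rfl hall, prod_congr rfl hall]
  push Not at hall
  obtain ⟨j, hj, hj1⟩ := hall
  have hdefect : 2 ≤ ∑ i ∈ s, (1 - η i) := by
    have hnonneg : ∀ i ∈ s, 0 ≤ 1 - η i := fun i hi => by
      rcases hη i hi with h | h <;> rw [h] <;> norm_num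
    calc (2 : ℝ) = 1 - η j := by rw [(hη j hj).resolve_left hj1]; norm_num
      _ ≤ ∑ i ∈ s, (1 - η i) := single_le_sum hnonneg hj
  have hprod : |∏ i ∈ s, η i| = 1 := by
    rw [abs_prod]
    exact prod_eq_one fun i hi => by rcases hη i hi with h | h <;> simp [h]
  rw [sum_sub_distrib, sum_const, nsmul_one] at hdefect
  linarith [neg_abs_le (∏ i ∈ s, η i)]

/-- `walsh n S z = (-1) ^ #(S ∩ z)`, reading `S` and `z` as subsets of `range n` through their
binary digits. -/
def walsh (n S z : ℕ) : ℝ :=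
  ∏ k ∈ range n, if S.testBit k && z.testBit k then -1 else 1

section Walsh

variable {n : ℕ}

theorem walsh_comm (n S z : ℕ) : walsh n S z = walsh n z S := by
  simp only [walsh, Bool.and_comm]

theorem walsh_zero (n S : ℕ) : walsh n S 0 = 1 := by
  simp [walsh]

theorem walsh_mul_walsh (n S x y : ℕ) : walsh n S x * walsh n S y = walsh n S (x ^^^ y) := by
  rw [walsh, walsh, walsh, ← prod_mul_distrib]
  refine prod_congr rfl fun k _ => ?_
  rw [Nat.testBit_xor]
  cases S.testBit k <;> cases x.testBit k <;> cases y.testBit k <;> norm_num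

theorem walsh_two_pow {k : ℕ} (hk : k < n) (S : ℕ) :
    walsh n S (2 ^ k) = if S.testBit k then -1 else 1 := by
  rw [walsh, prod_eq_single_of_mem k (mem_range.2 hk)]
  · simp [Nat.testBit_two_pow_self]
  · intro j _ hjk
    simp [Nat.testBit_two_pow_of_ne (Ne.symm hjk)]

theorem walsh_two_pow_sub_one (n S : ℕ) :
    walsh n S (2 ^ n - 1) = ∏ k ∈ range n, walsh n S (2 ^ k) := by
  refine prod_congr rfl fun k hk => ?_
  rw [walsh_two_pow (mem_range.1 hk), Nat.testBit_two_pow_sub_one,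
    decide_eq_true (mem_range.1 hk), Bool.and_true]

theorem sum_walsh {z : ℕ} (hz : z < 2 ^ n) :
    ∑ S : Fin (2 ^ n), walsh n S z = if z = 0 then 2 ^ n else 0 := by
  split_ifs with h
  · simp [h, walsh_zero]
  obtain ⟨i, hi⟩ := Nat.exists_testBit_of_ne_zero h
  have hin : i < n := by
    by_contra! hni
    rw [Nat.testBit_lt_two_pow (hz.trans_le (Nat.pow_le_pow_right two_pos hni))] at hi
    exact Bool.false_ne_true hi
  let m : Fin (2 ^ n) := ⟨2 ^ i, Nat.pow_lt_pow_right one_lt_two hin⟩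
  have hflip : ∀ S : Fin (2 ^ n), walsh n (S ^^^ m : Fin (2 ^ n)) z = - walsh n S z := by
    intro S
    rw [Fin.xor_val_of_two_pow, walsh_comm, ← walsh_mul_walsh, walsh_two_pow hin, if_pos hi,
      walsh_comm]
    ring
  have := Equiv.sum_comp (xor_left_involutive m).toPerm (fun S => walsh n S z)
  simp only [Function.Involutive.coe_toPerm, hflip, sum_neg_distrib] at this
  linarith

theorem sum_walsh_mul_walsh {a b : ℕ} (ha : a < 2 ^ n) (hb : b < 2 ^ n) :
    ∑ S : Fin (2 ^ n), walsh n S a * walsh n S b = if a = b then 2 ^ n else 0 := by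
  simp only [walsh_mul_walsh, sum_walsh (Nat.xor_lt_two_pow ha hb), xor_eq_zero_iff]

/-- The eigenvalue `(n - 2 #S) - (-1) ^ #S` of `V` on `walsh n S`: the hypercube adjacency
contributes the sum over the `n` neighbours `z ↦ z ^^^ 2 ^ k`, the antipodal map
`z ↦ z ^^^ (2 ^ n - 1)` the subtracted term. -/
def walshEigenvalue (n S : ℕ) : ℝ :=
  ∑ k ∈ range n, walsh n S (2 ^ k) - walsh n S (2 ^ n - 1)

theorem walshEigenvalue_le (n S : ℕ) : walshEigenvalue n S ≤ n - 1 := by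
  rw [walshEigenvalue, walsh_two_pow_sub_one]
  simpa using sum_sub_prod_le_card_sub_one (range n) fun k hk => by
    rw [walsh_two_pow (mem_range.1 hk)]
    split_ifs <;> simp

def bitSet (n z : ℕ) : Finset ℕ := {k ∈ range n | z.testBit k}

theorem filter_testBit_ne_eq_bitSet_xor (n x y : ℕ) :
    {k ∈ range n | x.testBit k ≠ y.testBit k} = bitSet n (x ^^^ y) := by
  refine filter_congr fun k _ => ?_
  rw [Nat.testBit_xor]
  cases x.testBit k <;> cases y.testBit k <;> decide

theorem eq_of_bitSet_eq {y z : ℕ} (hy : y < 2 ^ n) (hz : z < 2 ^ n)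
    (h : bitSet n y = bitSet n z) : y = z := by
  refine Nat.eq_of_testBit_eq fun j => ?_
  by_cases hj : j < n
  · have := Finset.ext_iff.1 h j
    simp only [bitSet, mem_filter, mem_range, hj, true_and] at this
    exact Bool.eq_iff_iff.2 this
  · have hle : 2 ^ n ≤ 2 ^ j := Nat.pow_le_pow_right two_pos (not_lt.1 hj)
    rw [Nat.testBit_lt_two_pow (hy.trans_le hle), Nat.testBit_lt_two_pow (hz.trans_le hle)]

theorem bitSet_two_pow_sub_one (n : ℕ) : bitSet n (2 ^ n - 1) = range n :=
  filter_true_of_mem fun k hk => by simpa using hk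

theorem bitSet_two_pow {k : ℕ} (hk : k < n) : bitSet n (2 ^ k) = {k} := by
  ext j
  simp only [bitSet, mem_filter, mem_range, Nat.testBit_two_pow, decide_eq_true_eq,
    mem_singleton]
  constructor
  · rintro ⟨-, rfl⟩; rfl
  · rintro rfl; exact ⟨hk, rfl⟩

theorem card_bitSet_eq_iff {z : ℕ} (hz : z < 2 ^ n) : #(bitSet n z) = n ↔ z = 2 ^ n - 1 := by
  constructor
  · intro h
    refine eq_of_bitSet_eq hz (Nat.sub_lt (Nat.two_pow_pos n) one_pos) ?_
    rw [bitSet_two_pow_sub_one]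
    exact eq_of_subset_of_card_le (filter_subset _ _) (by rw [h, card_range])
  · rintro rfl
    rw [bitSet_two_pow_sub_one, card_range]

theorem card_bitSet_eq_one_iff {z : ℕ} (hz : z < 2 ^ n) :
    #(bitSet n z) = 1 ↔ ∃ k < n, 2 ^ k = z := by
  constructor
  · intro h
    obtain ⟨k, hk⟩ := card_eq_one.1 h
    have hkn : k < n := mem_range.1 (mem_filter.1 (hk ▸ mem_singleton_self k)).1
    exact ⟨k, hkn, eq_of_bitSet_eq (Nat.pow_lt_pow_right one_lt_two hkn) hz
      (by rw [bitSet_two_pow hkn, hk])⟩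
  · rintro ⟨k, hkn, rfl⟩
    rw [bitSet_two_pow hkn, card_singleton]

theorem sum_range_ite_two_pow_eq {z : ℕ} (hz : z < 2 ^ n) (c : ℝ) :
    ∑ k ∈ range n, (if 2 ^ k = z then c else 0) = if #(bitSet n z) = 1 then c else 0 := by
  simp only [card_bitSet_eq_one_iff hz]
  split_ifs with h
  · obtain ⟨k, hkn, rfl⟩ := h
    simp_rw [Nat.pow_right_inj one_lt_two]
    rw [sum_ite_eq', if_pos (mem_range.2 hkn)]
  · exact sum_eq_zero fun k hk => if_neg fun e => h ⟨k, mem_range.1 hk, e⟩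

theorem sum_walshEigenvalue_mul_walsh (hn : 2 ≤ n) {z : ℕ} (hz : z < 2 ^ n) :
    ∑ S : Fin (2 ^ n), walshEigenvalue n S * walsh n S z =
      2 ^ n * if #(bitSet n z) = n then -1 else if #(bitSet n z) = 1 then 1 else 0 := by
  have hpow : ∀ k ∈ range n,
      ∑ S : Fin (2 ^ n), walsh n S (2 ^ k) * walsh n S z = if 2 ^ k = z then 2 ^ n else 0 :=
    fun k hk => sum_walsh_mul_walsh (Nat.pow_lt_pow_right one_lt_two (mem_range.1 hk)) hz
  simp only [walshEigenvalue, sub_mul, sum_mul, sum_sub_distrib]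
  rw [sum_comm, sum_congr rfl hpow, sum_range_ite_two_pow_eq hz,
    sum_walsh_mul_walsh (Nat.sub_lt (Nat.two_pow_pos n) one_pos) hz]
  simp only [eq_comm (a := 2 ^ n - 1), ← card_bitSet_eq_iff hz]
  split_ifs <;> first | omega | ring

end Walsh

theorem re_sum_conj_mul_mul_le_of_hamming {n : ℕ} (hn : 2 ≤ n)
    {V : Matrix (Fin (2 ^ n)) (Fin (2 ^ n)) ℝ}
    (hV : ∀ x y : Fin (2 ^ n), V x y =
      if #(bitSet n (x ^^^ y : ℕ)) = n then -1
      else if #(bitSet n (x ^^^ y : ℕ)) = 1 then 1 else 0)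
    (α : Fin (2 ^ n) → ℂ) :
    (∑ x, ∑ y, conj (α x) * (V x y : ℂ) * α y).re ≤ (n - 1) * ∑ x, ‖α x‖ ^ 2 := by
  have horth (x y : Fin (2 ^ n)) :
      ∑ S : Fin (2 ^ n), walsh n S x * walsh n S y = if x = y then 2 ^ n else 0 := by
    simp only [sum_walsh_mul_walsh x.isLt y.isLt, Fin.val_inj]
  have hspectral (x y : Fin (2 ^ n)) :
      2 ^ n * V x y = ∑ S : Fin (2 ^ n), walshEigenvalue n S * (walsh n S x * walsh n S y) := by
    simp only [hV, walsh_mul_walsh,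
      sum_walshEigenvalue_mul_walsh hn (Nat.xor_lt_two_pow x.isLt y.isLt)]
  exact re_sum_conj_mul_mul_le_of_orthogonal (by positivity) horth
    (fun S => walshEigenvalue_le n S) hspectral α

/-- The quadratic form of the combinatorial matrix `V` (entry `-1` at Hamming
distance `Δ-1`, entry `1` at Hamming distance `1`, zero otherwise) is bounded
by `(Δ-2)‖α‖²` for every vector `α ∈ ℂ^{2^{Δ-1}}`. -/
theorem V_quadratic_form_le (Δ : ℕ) (hΔ : 3 ≤ Δ)
    (V : Matrix (Fin (2 ^ (Δ - 1))) (Fin (2 ^ (Δ - 1))) ℝ)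
    (hV : ∀ x y : Fin (2 ^ (Δ - 1)),
      V x y =
        if ((Finset.range (Δ - 1)).filter
            (fun k => (x : ℕ).testBit k ≠ (y : ℕ).testBit k)).card = Δ - 1 then -1
        else if ((Finset.range (Δ - 1)).filter
            (fun k => (x : ℕ).testBit k ≠ (y : ℕ).testBit k)).card = 1 then 1
        else 0)
    (α : Fin (2 ^ (Δ - 1)) → ℂ) :
    (∑ x, ∑ y, (starRingEnd ℂ) (α x) * (V x y : ℂ) * α y).re ≤
      ((Δ : ℝ) - 2) * ∑ x, ‖α x‖ ^ 2 := by
  simp only [filter_testBit_ne_eq_bitSet_xor] at hV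
  convert re_sum_conj_mul_mul_le_of_hamming (by omega) hV α using 2
  push_cast [Nat.cast_sub (by omega : 1 ≤ Δ)]
  ring
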